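/- arXiv:2101.12606 — 2 statements merged into one kernel-verified Lean document; each statement's English description precedes it below -/
import Mathlib

section
/- (Near-optimal turnpike property.) Assume the discrete-time optimal control problem is strictly dissipative in one-step form with storage function λ and α ∈ K∞, that λ(x) ≥ −D for all x ∈ X (D > 0), and that there exist γ ∈ K∞ and C > 0 such that |V_T(x) − V_T(x^e)| ≤ γ(‖x−x^e‖) + C and |λ(x)| ≤ γ(‖x−x^e‖) + C for all x ∈ X and all horizons T. Then for every ε > 0, every δ ≥ 0, every horizon T ∈ ℕ, every x0 ∈ X, and every admissible control u for x0 on horizon T satisfying J_T(x0,u) ≤ V_T(x0) + δ, the number of times t ∈ {0,…,T−1} with ‖x(t)−x^e‖ > ε is at most (2γ(‖x0−x^e‖) + 2C + D + δ)/α(ε). -/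
/-- Trajectory of the discrete-time control system `x(t+1) = f(x(t), u(t))`, `x(0) = x0`. -/
def traj {n m : ℕ}
    (f : EuclideanSpace ℝ (Fin n) → EuclideanSpace ℝ (Fin m) → EuclideanSpace ℝ (Fin n))
    (x0 : EuclideanSpace ℝ (Fin n)) (u : ℕ → EuclideanSpace ℝ (Fin m)) :
    ℕ → EuclideanSpace ℝ (Fin n)
  | 0 => x0
  | t + 1 => f (traj f x0 u t) (u t)

/-- A control `u` is admissible for `x0` on horizon `T` if `u(t) ∈ U` for `t < T` and the
trajectory satisfies `x(t) ∈ X` for `t ≤ T`. -/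
def Admissible {n m : ℕ}
    (f : EuclideanSpace ℝ (Fin n) → EuclideanSpace ℝ (Fin m) → EuclideanSpace ℝ (Fin n))
    (X : Set (EuclideanSpace ℝ (Fin n))) (U : Set (EuclideanSpace ℝ (Fin m)))
    (x0 : EuclideanSpace ℝ (Fin n)) (u : ℕ → EuclideanSpace ℝ (Fin m)) (T : ℕ) : Prop :=
  (∀ t < T, u t ∈ U) ∧ (∀ t ≤ T, traj f x0 u t ∈ X)

/-- `α : [0,∞) → [0,∞)` is of class `K∞`: continuous, strictly increasing, unbounded
and `α(0) = 0`. -/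
def KInf (α : ℝ → ℝ) : Prop :=
  ContinuousOn α (Set.Ici 0) ∧ StrictMonoOn α (Set.Ici 0) ∧ α 0 = 0 ∧
    (∀ r ∈ Set.Ici (0:ℝ), 0 ≤ α r) ∧ (∀ M : ℝ, ∃ r ∈ Set.Ici (0:ℝ), M < α r)

/-!
Summing the dissipation inequality along a trajectory gives
`λ(x(T)) + ∑ α(‖x(t) - xᵉ‖) ≤ λ(x₀) + J_T(x₀, u) - T ℓ(xᵉ, uᵉ)`.
Staying at the equilibrium costs exactly `T ℓ(xᵉ, uᵉ)`, so `V_T(xᵉ) ≤ T ℓ(xᵉ, uᵉ)`; for a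
`δ`-optimal control the sum of the `α`-deviations is therefore at most
`λ(x₀) + D + V_T(x₀) - V_T(xᵉ) + δ ≤ 2γ(‖x₀ - xᵉ‖) + 2C + D + δ`.
Every time with `‖x(t) - xᵉ‖ > ε` contributes at least `α(ε)` to that sum.
-/

def cost {n m : ℕ}
    (f : EuclideanSpace ℝ (Fin n) → EuclideanSpace ℝ (Fin m) → EuclideanSpace ℝ (Fin n))
    (ℓ : EuclideanSpace ℝ (Fin n) → EuclideanSpace ℝ (Fin m) → ℝ) (T : ℕ)
    (x0 : EuclideanSpace ℝ (Fin n)) (u : ℕ → EuclideanSpace ℝ (Fin m)) : ℝ :=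
  ∑ t ∈ Finset.range T, ℓ (traj f x0 u t) (u t)

/-- `sInf` makes this `0` when no control is admissible or the costs are unbounded below, so
bounds on it need a lower bound on the costs (see `value_le_cost`). -/
noncomputable def value {n m : ℕ}
    (f : EuclideanSpace ℝ (Fin n) → EuclideanSpace ℝ (Fin m) → EuclideanSpace ℝ (Fin n))
    (X : Set (EuclideanSpace ℝ (Fin n))) (U : Set (EuclideanSpace ℝ (Fin m)))
    (ℓ : EuclideanSpace ℝ (Fin n) → EuclideanSpace ℝ (Fin m) → ℝ) (T : ℕ)
    (x0 : EuclideanSpace ℝ (Fin n)) : ℝ :=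
  sInf {c : ℝ | ∃ u, Admissible f X U x0 u T ∧ c = cost f ℓ T x0 u}

def StrictlyDissipative {n m : ℕ}
    (f : EuclideanSpace ℝ (Fin n) → EuclideanSpace ℝ (Fin m) → EuclideanSpace ℝ (Fin n))
    (X : Set (EuclideanSpace ℝ (Fin n))) (U : Set (EuclideanSpace ℝ (Fin m)))
    (ℓ : EuclideanSpace ℝ (Fin n) → EuclideanSpace ℝ (Fin m) → ℝ)
    (xe : EuclideanSpace ℝ (Fin n)) (ue : EuclideanSpace ℝ (Fin m))
    (lam : EuclideanSpace ℝ (Fin n) → ℝ) (α : ℝ → ℝ) : Prop :=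
  ∀ x ∈ X, ∀ u ∈ U, f x u ∈ X → lam (f x u) ≤ lam x + ℓ x u - ℓ xe ue - α ‖x - xe‖

namespace KInf

variable {α : ℝ → ℝ} (hα : KInf α)
include hα

theorem nonneg {r : ℝ} (hr : 0 ≤ r) : 0 ≤ α r :=
  hα.2.2.2.1 r hr

theorem apply_lt_apply {r s : ℝ} (hr : 0 ≤ r) (hrs : r < s) : α r < α s :=
  hα.2.1 hr (hr.trans hrs.le) hrs

theorem pos {r : ℝ} (hr : 0 < r) : 0 < α r :=
  hα.2.2.1 ▸ hα.apply_lt_apply le_rfl hr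

end KInf

theorem card_filter_mul_le_sum {ι : Type*} (s : Finset ι) (p : ι → Prop) [DecidablePred p]
    {g : ι → ℝ} {c : ℝ} (hg : ∀ i ∈ s, 0 ≤ g i) (hc : ∀ i ∈ s, p i → c ≤ g i) :
    ((s.filter p).card : ℝ) * c ≤ ∑ i ∈ s, g i :=
  calc ((s.filter p).card : ℝ) * c
      ≤ ∑ i ∈ s.filter p, g i := by
        rw [← nsmul_eq_mul]
        exact Finset.card_nsmul_le_sum _ _ _ fun i hi =>
          hc i (Finset.mem_of_mem_filter i hi) (Finset.mem_filter.mp hi).2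
    _ ≤ ∑ i ∈ s, g i :=
        Finset.sum_le_sum_of_subset_of_nonneg (Finset.filter_subset _ _) fun i hi _ => hg i hi

section ControlSystem

variable {n m : ℕ}
  {f : EuclideanSpace ℝ (Fin n) → EuclideanSpace ℝ (Fin m) → EuclideanSpace ℝ (Fin n)}
  {X : Set (EuclideanSpace ℝ (Fin n))} {U : Set (EuclideanSpace ℝ (Fin m))}
  {ℓ : EuclideanSpace ℝ (Fin n) → EuclideanSpace ℝ (Fin m) → ℝ}
  {xe x0 : EuclideanSpace ℝ (Fin n)} {ue : EuclideanSpace ℝ (Fin m)}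
  {u : ℕ → EuclideanSpace ℝ (Fin m)} {T : ℕ}

theorem Admissible.mono {k : ℕ} (h : Admissible f X U x0 u T) (hk : k ≤ T) :
    Admissible f X U x0 u k :=
  ⟨fun t ht => h.1 t (ht.trans_le hk), fun t ht => h.2 t (ht.trans hk)⟩

theorem traj_const_of_eq (heq : f xe ue = xe) (t : ℕ) : traj f xe (fun _ => ue) t = xe := by
  induction t with
  | zero => rfl
  | succ k ih => simp only [traj, ih, heq]

theorem admissible_const_of_eq (hxe : xe ∈ X) (hue : ue ∈ U) (heq : f xe ue = xe) (T : ℕ) :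
    Admissible f X U xe (fun _ => ue) T :=
  ⟨fun _ _ => hue, fun t _ => by rw [traj_const_of_eq heq]; exact hxe⟩

theorem cost_const_of_eq (heq : f xe ue = xe) (T : ℕ) :
    cost f ℓ T xe (fun _ => ue) = T * ℓ xe ue := by
  simp [cost, traj_const_of_eq heq]

theorem value_le_cost {b : ℝ} (hb : ∀ v, Admissible f X U x0 v T → b ≤ cost f ℓ T x0 v)
    (hu : Admissible f X U x0 u T) : value f X U ℓ T x0 ≤ cost f ℓ T x0 u :=
  csInf_le ⟨b, fun _ ⟨v, hv, hc⟩ => hc ▸ hb v hv⟩ ⟨u, hu, rfl⟩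

variable {lam : EuclideanSpace ℝ (Fin n) → ℝ} {α : ℝ → ℝ}

theorem StrictlyDissipative.storage_add_sum_le (hdiss : StrictlyDissipative f X U ℓ xe ue lam α)
    (hu : Admissible f X U x0 u T) :
    lam (traj f x0 u T) + ∑ t ∈ Finset.range T, α ‖traj f x0 u t - xe‖ ≤
      lam x0 + cost f ℓ T x0 u - T * ℓ xe ue := by
  induction T with
  | zero => simp [traj, cost]
  | succ k ih =>
    have hstep := hdiss _ (hu.2 k k.le_succ) (u k) (hu.1 k k.lt_succ_self) (hu.2 (k + 1) le_rfl)
    have hk := ih (hu.mono k.le_succ)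
    simp only [cost, Finset.sum_range_succ, Nat.cast_succ] at hk ⊢
    simp only [traj] at hstep ⊢
    linarith

theorem StrictlyDissipative.value_equilibrium_le {D : ℝ}
    (hdiss : StrictlyDissipative f X U ℓ xe ue lam α) (hα : ∀ r ∈ Set.Ici (0 : ℝ), 0 ≤ α r)
    (hlam : ∀ x ∈ X, -D ≤ lam x) (hxe : xe ∈ X) (hue : ue ∈ U) (heq : f xe ue = xe) :
    value f X U ℓ T xe ≤ T * ℓ xe ue := by
  have hcost : ∀ v, Admissible f X U xe v T → T * ℓ xe ue - D - lam xe ≤ cost f ℓ T xe v :=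
    fun v hv => by
      have hbalance := hdiss.storage_add_sum_le hv
      have hsum : 0 ≤ ∑ t ∈ Finset.range T, α ‖traj f xe v t - xe‖ :=
        Finset.sum_nonneg fun t _ => hα _ (norm_nonneg _)
      linarith [hlam _ (hv.2 T le_rfl)]
  exact cost_const_of_eq (ℓ := ℓ) heq T ▸
    value_le_cost hcost (admissible_const_of_eq hxe hue heq T)

theorem StrictlyDissipative.sum_le_of_cost_le_value_add {D δ : ℝ}
    (hdiss : StrictlyDissipative f X U ℓ xe ue lam α) (hα : ∀ r ∈ Set.Ici (0 : ℝ), 0 ≤ α r)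
    (hlam : ∀ x ∈ X, -D ≤ lam x) (hxe : xe ∈ X) (hue : ue ∈ U) (heq : f xe ue = xe)
    (hu : Admissible f X U x0 u T) (hopt : cost f ℓ T x0 u ≤ value f X U ℓ T x0 + δ) :
    ∑ t ∈ Finset.range T, α ‖traj f x0 u t - xe‖ ≤
      lam x0 + D + (value f X U ℓ T x0 - value f X U ℓ T xe) + δ := by
  linarith [hdiss.storage_add_sum_le hu, hlam _ (hu.2 T le_rfl),
    hdiss.value_equilibrium_le (T := T) hα hlam hxe hue heq]

end ControlSystem

theorem near_optimal_turnpike_general {n m : ℕ}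
    (f : EuclideanSpace ℝ (Fin n) → EuclideanSpace ℝ (Fin m) → EuclideanSpace ℝ (Fin n))
    (X : Set (EuclideanSpace ℝ (Fin n))) (U : Set (EuclideanSpace ℝ (Fin m)))
    (ℓ : EuclideanSpace ℝ (Fin n) → EuclideanSpace ℝ (Fin m) → ℝ)
    (J : ℕ → EuclideanSpace ℝ (Fin n) → (ℕ → EuclideanSpace ℝ (Fin m)) → ℝ)
    (hJ : ∀ T x0 u, J T x0 u = ∑ t ∈ Finset.range T, ℓ (traj f x0 u t) (u t))
    (V : ℕ → EuclideanSpace ℝ (Fin n) → ℝ)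
    (hV : ∀ T x0, V T x0 = sInf {c : ℝ | ∃ u, Admissible f X U x0 u T ∧ c = J T x0 u})
    (xe : EuclideanSpace ℝ (Fin n)) (ue : EuclideanSpace ℝ (Fin m))
    (hxe : xe ∈ X) (hue : ue ∈ U) (heq : f xe ue = xe)
    (lam : EuclideanSpace ℝ (Fin n) → ℝ) (α : ℝ → ℝ) (hα : KInf α)
    (hdiss : ∀ x ∈ X, ∀ u ∈ U, f x u ∈ X →
      lam (f x u) ≤ lam x + ℓ x u - ℓ xe ue - α ‖x - xe‖)
    (D : ℝ) (hlam : ∀ x ∈ X, -D ≤ lam x)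
    (γ : ℝ → ℝ) (C : ℝ)
    (hVbound : ∀ x ∈ X, ∀ T : ℕ, |V T x - V T xe| ≤ γ ‖x - xe‖ + C)
    (hlambound : ∀ x ∈ X, |lam x| ≤ γ ‖x - xe‖ + C) :
    ∀ ε > (0:ℝ), ∀ δ ≥ (0:ℝ), ∀ T : ℕ, ∀ x0 ∈ X,
      ∀ u : ℕ → EuclideanSpace ℝ (Fin m),
        Admissible f X U x0 u T → J T x0 u ≤ V T x0 + δ →
        (((Finset.range T).filter (fun t => ε < ‖traj f x0 u t - xe‖)).card : ℝ) ≤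
          (2 * γ ‖x0 - xe‖ + 2 * C + D + δ) / α ε := by
  intro ε hε δ _ T x0 hx0 u hu hopt
  obtain rfl : J = cost f ℓ := funext fun T => funext fun x0 => funext fun u => hJ T x0 u
  obtain rfl : V = value f X U ℓ := funext fun T => funext fun x0 => hV T x0
  have hsum := StrictlyDissipative.sum_le_of_cost_le_value_add hdiss (fun r hr => hα.nonneg hr)
    hlam hxe hue heq hu hopt
  rw [le_div_iff₀ (hα.pos hε)]
  calc _ ≤ ∑ t ∈ Finset.range T, α ‖traj f x0 u t - xe‖ :=
        card_filter_mul_le_sum _ _ (fun t _ => hα.nonneg (norm_nonneg _))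
          fun t _ ht => (hα.apply_lt_apply hε.le ht).le
    _ ≤ 2 * γ ‖x0 - xe‖ + 2 * C + D + δ := by
        linarith [hsum, (abs_le.mp (hlambound x0 hx0)).2, (abs_le.mp (hVbound x0 hx0 T)).2]

/-- Near-optimal turnpike property: for every admissible control with
`J_T(x0,u) ≤ V_T(x0) + δ`, the number of times `t < T` with `‖x(t)−xᵉ‖ > ε` is at most
`(2γ(‖x0−xᵉ‖) + 2C + D + δ)/α(ε)`. -/
theorem near_optimal_turnpike {n m : ℕ}
    (f : EuclideanSpace ℝ (Fin n) → EuclideanSpace ℝ (Fin m) → EuclideanSpace ℝ (Fin n))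
    (X : Set (EuclideanSpace ℝ (Fin n))) (U : Set (EuclideanSpace ℝ (Fin m)))
    (ℓ : EuclideanSpace ℝ (Fin n) → EuclideanSpace ℝ (Fin m) → ℝ)
    (J : ℕ → EuclideanSpace ℝ (Fin n) → (ℕ → EuclideanSpace ℝ (Fin m)) → ℝ)
    (hJ : ∀ T x0 u, J T x0 u = ∑ t ∈ Finset.range T, ℓ (traj f x0 u t) (u t))
    (V : ℕ → EuclideanSpace ℝ (Fin n) → ℝ)
    (hV : ∀ T x0, V T x0 = sInf {c : ℝ | ∃ u, Admissible f X U x0 u T ∧ c = J T x0 u})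
    (xe : EuclideanSpace ℝ (Fin n)) (ue : EuclideanSpace ℝ (Fin m))
    (hxe : xe ∈ X) (hue : ue ∈ U) (heq : f xe ue = xe)
    (lam : EuclideanSpace ℝ (Fin n) → ℝ) (α : ℝ → ℝ) (hα : KInf α)
    (hdiss : ∀ x ∈ X, ∀ u ∈ U, f x u ∈ X →
      lam (f x u) ≤ lam x + ℓ x u - ℓ xe ue - α ‖x - xe‖)
    (D : ℝ) (hD : 0 < D) (hlam : ∀ x ∈ X, -D ≤ lam x)
    (γ : ℝ → ℝ) (hγ : KInf γ) (C : ℝ) (hC : 0 < C)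
    (hVbound : ∀ x ∈ X, ∀ T : ℕ, |V T x - V T xe| ≤ γ ‖x - xe‖ + C)
    (hlambound : ∀ x ∈ X, |lam x| ≤ γ ‖x - xe‖ + C) :
    ∀ ε > (0:ℝ), ∀ δ ≥ (0:ℝ), ∀ T : ℕ, ∀ x0 ∈ X,
      ∀ u : ℕ → EuclideanSpace ℝ (Fin m),
        Admissible f X U x0 u T → J T x0 u ≤ V T x0 + δ →
        (((Finset.range T).filter (fun t => ε < ‖traj f x0 u t - xe‖)).card : ℝ) ≤
          (2 * γ ‖x0 - xe‖ + 2 * C + D + δ) / α ε :=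
  near_optimal_turnpike_general f X U ℓ J hJ V hV xe ue hxe hue heq lam α hα hdiss D hlam γ C
    hVbound hlambound
end

section
/- (The required supply is a storage function.) Let s : ℝ^n × ℝ^m → ℝ be a supply rate, α ∈ K∞ and x^e ∈ X. Assume every x ∈ X is reachable from x^e, i.e., for every x ∈ X there exist T ∈ ℕ and a control u admissible for x^e on horizon T whose trajectory satisfies x(T) = x. Define the required supply V(x) := inf over all such T and u of Σ_{t=0}^{T−1} ( s(x(t),u(t)) − α(‖x(t)−x^e‖) ), and assume V(x) ≥ −M for all x ∈ X with a constant M ≥ 0. Then for every x0 ∈ X, every t ∈ ℕ and every control u admissible for x0 on horizon t, the strict dissipation inequality V(x(t)) ≤ V(x0) + Σ_{τ=0}^{t−1} ( s(x(τ),u(τ)) − α(‖x(τ)−x^e‖) ) holds; i.e., λ = V is a storage function bounded from below certifying strict dissipativity. -/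
/-!
Concatenating a control that steers `xᵉ` to `x0` with an admissible control from
`x0` gives a control steering `xᵉ` to `x(t)` whose supply is the sum of the two supplies, so
every supply in the set defining `V x0`, shifted by the supply spent along `u`, lies in the set
defining `V (x t)`. Taking infima gives the dissipation inequality, and the lower bound on the
supplies passes to their infimum.
-/

section Concatenation

variable {n m : ℕ}
  (f : EuclideanSpace ℝ (Fin n) → EuclideanSpace ℝ (Fin m) → EuclideanSpace ℝ (Fin n))

def concatControl (T : ℕ) (w u : ℕ → EuclideanSpace ℝ (Fin m)) : ℕ → EuclideanSpace ℝ (Fin m) :=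
  fun τ => if τ < T then w τ else u (τ - T)

lemma concatControl_of_lt {T τ : ℕ} (w u : ℕ → EuclideanSpace ℝ (Fin m)) (h : τ < T) :
    concatControl T w u τ = w τ :=
  if_pos h

lemma concatControl_add (T : ℕ) (w u : ℕ → EuclideanSpace ℝ (Fin m)) (k : ℕ) :
    concatControl T w u (T + k) = u k := by
  simp [concatControl]

lemma traj_congr (x0 : EuclideanSpace ℝ (Fin n)) {u v : ℕ → EuclideanSpace ℝ (Fin m)} {k : ℕ}
    (h : ∀ τ < k, u τ = v τ) : traj f x0 u k = traj f x0 v k := by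
  induction k with
  | zero => rfl
  | succ k ih =>
    simp only [traj, ih fun τ hτ => h τ (Nat.lt_succ_of_lt hτ), h k (Nat.lt_succ_self k)]

lemma traj_add (x0 : EuclideanSpace ℝ (Fin n)) (u : ℕ → EuclideanSpace ℝ (Fin m)) (T k : ℕ) :
    traj f x0 u (T + k) = traj f (traj f x0 u T) (fun i => u (T + i)) k := by
  induction k with
  | zero => rfl
  | succ k ih => rw [← Nat.add_assoc, traj, ih]; rfl

lemma traj_concatControl_of_le (x0 : EuclideanSpace ℝ (Fin n))
    (w u : ℕ → EuclideanSpace ℝ (Fin m)) {T k : ℕ} (hk : k ≤ T) :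
    traj f x0 (concatControl T w u) k = traj f x0 w k :=
  traj_congr f x0 fun _ hτ => concatControl_of_lt w u (hτ.trans_le hk)

lemma traj_concatControl_add (x0 : EuclideanSpace ℝ (Fin n))
    (w u : ℕ → EuclideanSpace ℝ (Fin m)) (T k : ℕ) :
    traj f x0 (concatControl T w u) (T + k) = traj f (traj f x0 w T) u k := by
  rw [traj_add, traj_concatControl_of_le f x0 w u le_rfl]
  simp only [concatControl_add]

lemma Admissible.concatControl {X : Set (EuclideanSpace ℝ (Fin n))}
    {U : Set (EuclideanSpace ℝ (Fin m))} {x0 : EuclideanSpace ℝ (Fin n)}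
    {w u : ℕ → EuclideanSpace ℝ (Fin m)} {T t : ℕ} (hw : Admissible f X U x0 w T)
    (hu : Admissible f X U (traj f x0 w T) u t) :
    Admissible f X U x0 (concatControl T w u) (T + t) := by
  constructor
  · intro τ hτ
    by_cases h : τ < T
    · rw [concatControl_of_lt w u h]
      exact hw.1 τ h
    · obtain ⟨k, rfl⟩ := Nat.exists_eq_add_of_le (not_lt.mp h)
      rw [concatControl_add]
      exact hu.1 k (by omega)
  · intro k hk
    by_cases h : k ≤ T
    · rw [traj_concatControl_of_le f x0 w u h]
      exact hw.2 k h
    · obtain ⟨j, rfl⟩ := Nat.exists_eq_add_of_le (le_of_not_ge h)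
      rw [traj_concatControl_add]
      exact hu.2 j (by omega)

def runningCost (ℓ : EuclideanSpace ℝ (Fin n) → EuclideanSpace ℝ (Fin m) → ℝ)
    (x0 : EuclideanSpace ℝ (Fin n)) (u : ℕ → EuclideanSpace ℝ (Fin m)) (T : ℕ) : ℝ :=
  ∑ t ∈ Finset.range T, ℓ (traj f x0 u t) (u t)

lemma runningCost_concatControl (ℓ : EuclideanSpace ℝ (Fin n) → EuclideanSpace ℝ (Fin m) → ℝ)
    (x0 : EuclideanSpace ℝ (Fin n)) (w u : ℕ → EuclideanSpace ℝ (Fin m)) (T t : ℕ) :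
    runningCost f ℓ x0 (concatControl T w u) (T + t) =
      runningCost f ℓ x0 w T + runningCost f ℓ (traj f x0 w T) u t := by
  rw [runningCost, Finset.sum_range_add]
  congr 1
  · refine Finset.sum_congr rfl fun i hi => ?_
    have hi : i < T := Finset.mem_range.mp hi
    rw [traj_concatControl_of_le f x0 w u hi.le, concatControl_of_lt w u hi]
  · refine Finset.sum_congr rfl fun i _ => ?_
    rw [traj_concatControl_add, concatControl_add]

end Concatenation

section RequiredSupply

variable {n m : ℕ}
  (f : EuclideanSpace ℝ (Fin n) → EuclideanSpace ℝ (Fin m) → EuclideanSpace ℝ (Fin n))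
  (X : Set (EuclideanSpace ℝ (Fin n))) (U : Set (EuclideanSpace ℝ (Fin m)))
  (ℓ : EuclideanSpace ℝ (Fin n) → EuclideanSpace ℝ (Fin m) → ℝ) (xe : EuclideanSpace ℝ (Fin n))

def reachCosts (x : EuclideanSpace ℝ (Fin n)) : Set ℝ :=
  {c | ∃ T u, Admissible f X U xe u T ∧ traj f xe u T = x ∧ c = runningCost f ℓ xe u T}

lemma add_runningCost_mem_reachCosts {x0 : EuclideanSpace ℝ (Fin n)} {c : ℝ}
    (hc : c ∈ reachCosts f X U ℓ xe x0) {u : ℕ → EuclideanSpace ℝ (Fin m)} {t : ℕ}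
    (hu : Admissible f X U x0 u t) :
    c + runningCost f ℓ x0 u t ∈ reachCosts f X U ℓ xe (traj f x0 u t) := by
  obtain ⟨T, w, hw, rfl, rfl⟩ := hc
  exact ⟨T + t, concatControl T w u, hw.concatControl f hu, traj_concatControl_add f xe w u T t,
    (runningCost_concatControl f ℓ xe w u T t).symm⟩

lemma sInf_reachCosts_traj_le {x0 : EuclideanSpace ℝ (Fin n)}
    (hx0 : (reachCosts f X U ℓ xe x0).Nonempty) {u : ℕ → EuclideanSpace ℝ (Fin m)} {t : ℕ}
    (hbdd : BddBelow (reachCosts f X U ℓ xe (traj f x0 u t)))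
    (hu : Admissible f X U x0 u t) :
    sInf (reachCosts f X U ℓ xe (traj f x0 u t)) ≤
      sInf (reachCosts f X U ℓ xe x0) + runningCost f ℓ x0 u t := by
  rw [← sub_le_iff_le_add]
  refine le_csInf hx0 fun c hc => sub_le_iff_le_add.mpr ?_
  exact csInf_le hbdd (add_runningCost_mem_reachCosts f X U ℓ xe hc hu)

end RequiredSupply

theorem required_supply_is_storage_function_general {n m : ℕ}
    (f : EuclideanSpace ℝ (Fin n) → EuclideanSpace ℝ (Fin m) → EuclideanSpace ℝ (Fin n))
    (X : Set (EuclideanSpace ℝ (Fin n))) (U : Set (EuclideanSpace ℝ (Fin m)))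
    (s : EuclideanSpace ℝ (Fin n) → EuclideanSpace ℝ (Fin m) → ℝ)
    (α : ℝ → ℝ)
    (xe : EuclideanSpace ℝ (Fin n))
    -- the set of supplies needed to reach `x` from `xᵉ`
    (cost : EuclideanSpace ℝ (Fin n) → Set ℝ)
    (hcost : ∀ x, cost x = {c : ℝ | ∃ T : ℕ, ∃ u, Admissible f X U xe u T ∧
      traj f xe u T = x ∧
      c = ∑ t ∈ Finset.range T, (s (traj f xe u t) (u t) - α ‖traj f xe u t - xe‖)})
    -- every `x ∈ X` is reachable from `xᵉ`
    (hreach : ∀ x ∈ X, (cost x).Nonempty)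
    (M : ℝ)
    -- the required supply is bounded from below by `−M`
    (hbelow : ∀ x ∈ X, ∀ c ∈ cost x, -M ≤ c)
    (V : EuclideanSpace ℝ (Fin n) → ℝ)
    (hVdef : ∀ x, V x = sInf (cost x)) :
    (∀ x ∈ X, -M ≤ V x) ∧
    (∀ x0 ∈ X, ∀ t : ℕ, ∀ u : ℕ → EuclideanSpace ℝ (Fin m), Admissible f X U x0 u t →
      V (traj f x0 u t) ≤ V x0 +
        ∑ τ ∈ Finset.range t, (s (traj f x0 u τ) (u τ) - α ‖traj f x0 u τ - xe‖)) := by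
  have hcost_eq : cost = reachCosts f X U (fun x v => s x v - α ‖x - xe‖) xe := funext hcost
  refine ⟨fun x hx => hVdef x ▸ le_csInf (hreach x hx) (hbelow x hx), ?_⟩
  intro x0 hx0 t u hu
  have hbdd : BddBelow (cost (traj f x0 u t)) := ⟨-M, hbelow _ (hu.2 t le_rfl)⟩
  rw [hVdef, hVdef]
  subst hcost_eq
  exact sInf_reachCosts_traj_le f X U _ xe (hreach x0 hx0) hbdd hu

/-- The required supply
`V(x) = inf { Σ_{t<T} (s(x(t),u(t)) − α(‖x(t)−xᵉ‖)) | trajectories from xᵉ to x }`,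
if bounded from below, is a storage function (bounded from below) certifying strict
dissipativity. -/
theorem required_supply_is_storage_function {n m : ℕ}
    (f : EuclideanSpace ℝ (Fin n) → EuclideanSpace ℝ (Fin m) → EuclideanSpace ℝ (Fin n))
    (X : Set (EuclideanSpace ℝ (Fin n))) (U : Set (EuclideanSpace ℝ (Fin m)))
    (s : EuclideanSpace ℝ (Fin n) → EuclideanSpace ℝ (Fin m) → ℝ)
    (α : ℝ → ℝ) (hα : KInf α)
    (xe : EuclideanSpace ℝ (Fin n)) (hxe : xe ∈ X)
    -- the set of supplies needed to reach `x` from `xᵉ`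
    (cost : EuclideanSpace ℝ (Fin n) → Set ℝ)
    (hcost : ∀ x, cost x = {c : ℝ | ∃ T : ℕ, ∃ u, Admissible f X U xe u T ∧
      traj f xe u T = x ∧
      c = ∑ t ∈ Finset.range T, (s (traj f xe u t) (u t) - α ‖traj f xe u t - xe‖)})
    -- every `x ∈ X` is reachable from `xᵉ`
    (hreach : ∀ x ∈ X, (cost x).Nonempty)
    (M : ℝ) (hM : 0 ≤ M)
    -- the required supply is bounded from below by `−M`
    (hbelow : ∀ x ∈ X, ∀ c ∈ cost x, -M ≤ c)
    (V : EuclideanSpace ℝ (Fin n) → ℝ)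
    (hVdef : ∀ x, V x = sInf (cost x)) :
    (∀ x ∈ X, -M ≤ V x) ∧
    (∀ x0 ∈ X, ∀ t : ℕ, ∀ u : ℕ → EuclideanSpace ℝ (Fin m), Admissible f X U x0 u t →
      V (traj f x0 u t) ≤ V x0 +
        ∑ τ ∈ Finset.range t, (s (traj f x0 u τ) (u τ) - α ‖traj f x0 u τ - xe‖)) :=
  required_supply_is_storage_function_general f X U s α xe cost hcost hreach M hbelow V hVdef
end
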